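/- arXiv:1501.02180 — 5 statements merged into one kernel-verified Lean document; each statement's English description precedes it below -/
import Mathlib

section
/- Let ε > 0, Δt > 0, σ_s ≥ 0, σ_a ≥ 0, σ_t = σ_s + ε²σ_a > 0, h > 0, φ ≥ 0, and d² ∈ [−4/h², 0]. If Δt ≤ 1/σ_a (vacuously if σ_a = 0), Δt ≤ max{εh/2, h²σ_t/4}, and φ ≤ hσ_t/(2ε³) when hσ_t ≤ 2ε while φ ≤ 1/ε² otherwise, then det(G) := (ε²/(ε² + σ_s Δt)) · ((1 − σ_a Δt)² − φ d² Δt²) satisfies det(G) ≤ 1. -/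
/-!
Clearing the denominator, the claim reads
`ε²(1 − σ_a Δt)² + ε² φ (−d²) Δt² ≤ ε² + σ_s Δt`.
Since `0 ≤ σ_a Δt ≤ 1`, the damping term satisfies `ε²(1 − σ_a Δt)² ≤ ε² − ε² σ_a Δt`, so it suffices that
`ε² φ Δt (−d²) ≤ σ_t`. As `−d² ≤ 4/h²`, this follows from `4 ε² φ Δt ≤ h² σ_t`, which is exactly what the
CFL condition and the bound on `φ` give in each of the two regimes `h σ_t ≤ 2ε` and `h σ_t > 2ε`.
-/

theorem four_mul_sq_mul_mul_le_of_cfl {ε Δt σt h φ : ℝ} (hε : 0 < ε) (hh : 0 < h) (hφ : 0 ≤ φ)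
    (hΔt : 0 ≤ Δt) (hCFL : Δt ≤ max (ε * h / 2) (h ^ 2 * σt / 4))
    (hφbd : if h * σt ≤ 2 * ε then φ ≤ h * σt / (2 * ε ^ 3) else φ ≤ 1 / ε ^ 2) :
    4 * (ε ^ 2 * φ * Δt) ≤ h ^ 2 * σt := by
  split_ifs at hφbd with hc
  · have hΔt' : Δt ≤ ε * h / 2 := hCFL.trans_eq (max_eq_left (by nlinarith))
    calc 4 * (ε ^ 2 * φ * Δt) ≤ 4 * (ε ^ 2 * (h * σt / (2 * ε ^ 3)) * (ε * h / 2)) := by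
          gcongr; exact mul_nonneg (sq_nonneg ε) (hφ.trans hφbd)
      _ = h ^ 2 * σt := by field_simp; ring
  · have hΔt' : Δt ≤ h ^ 2 * σt / 4 := hCFL.trans_eq (max_eq_right (by nlinarith))
    calc 4 * (ε ^ 2 * φ * Δt) ≤ 4 * (ε ^ 2 * (1 / ε ^ 2) * (h ^ 2 * σt / 4)) := by gcongr
      _ = h ^ 2 * σt := by field_simp

theorem mul_neg_le_of_four_mul_le {x h σ d : ℝ} (hx : 0 ≤ x) (hh : 0 < h)
    (hxσ : 4 * x ≤ h ^ 2 * σ) (hd : -(4 / h ^ 2) ≤ d) : x * -d ≤ σ :=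
  calc x * -d ≤ x * (4 / h ^ 2) := by gcongr; linarith
    _ = 4 * x / h ^ 2 := by ring
    _ ≤ σ := by rw [div_le_iff₀ (by positivity)]; linarith

theorem stmt1_general (ε Δt σs σa σt h φ dsq : ℝ)
    (hε : 0 < ε) (hΔt : 0 < Δt) (hσs : 0 ≤ σs) (hσa : 0 ≤ σa)
    (hσt : σt = σs + ε ^ 2 * σa)
    (hh : 0 < h) (hφ : 0 ≤ φ)
    (hdsq1 : -(4 / h ^ 2) ≤ dsq)
    (hCFL1 : σa * Δt ≤ 1)
    (hCFL2 : Δt ≤ max (ε * h / 2) (h ^ 2 * σt / 4))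
    (hφbd : if h * σt ≤ 2 * ε then φ ≤ h * σt / (2 * ε ^ 3) else φ ≤ 1 / ε ^ 2) :
    ε ^ 2 / (ε ^ 2 + σs * Δt) * ((1 - σa * Δt) ^ 2 - φ * dsq * Δt ^ 2) ≤ 1 := by
  have hflux : ε ^ 2 * φ * Δt * -dsq ≤ σt :=
    mul_neg_le_of_four_mul_le (by positivity) hh
      (four_mul_sq_mul_mul_le_of_cfl hε hh hφ hΔt.le hCFL2 hφbd) hdsq1
  have hdamp : (1 - σa * Δt) ^ 2 ≤ 1 - σa * Δt :=
    sq_le (by linarith) (by linarith [mul_nonneg hσa hΔt.le])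
  rw [div_mul_eq_mul_div, div_le_one (by positivity)]
  nlinarith [mul_le_mul_of_nonneg_left hdamp (sq_nonneg ε),
    mul_le_mul_of_nonneg_right hflux hΔt.le]

/-- Determinant bound in the von Neumann stability analysis:
under the CFL condition and the bound on the relaxation parameter φ,
`det(G) = (ε²/(ε² + σ_s Δt))·((1 − σ_a Δt)² − φ d² Δt²) ≤ 1`. -/
theorem stmt1 (ε Δt σs σa σt h φ dsq : ℝ)
    (hε : 0 < ε) (hΔt : 0 < Δt) (hσs : 0 ≤ σs) (hσa : 0 ≤ σa)
    (hσt : σt = σs + ε ^ 2 * σa) (hσtpos : 0 < σt)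
    (hh : 0 < h) (hφ : 0 ≤ φ)
    (hdsq1 : -(4 / h ^ 2) ≤ dsq) (hdsq2 : dsq ≤ 0)
    (hCFL1 : σa * Δt ≤ 1)
    (hCFL2 : Δt ≤ max (ε * h / 2) (h ^ 2 * σt / 4))
    (hφbd : if h * σt ≤ 2 * ε then φ ≤ h * σt / (2 * ε ^ 3) else φ ≤ 1 / ε ^ 2) :
    ε ^ 2 / (ε ^ 2 + σs * Δt) * ((1 - σa * Δt) ^ 2 - φ * dsq * Δt ^ 2) ≤ 1 :=
  stmt1_general ε Δt σs σa σt h φ dsq hε hΔt hσs hσa hσt hh hφ hdsq1 hCFL1 hCFL2 hφbd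
end

section
/- Let ε > 0, Δt > 0, σ_s ≥ 0, σ_a ≥ 0 with σ_s + ε²σ_a > 0, φ ≥ 0, and d² ≤ 0 real. Define g = (1/2)(1/(ε² + σ_s Δt)) · (Δt² d² (1 − ε²φ) + (1 − σ_a Δt)(2ε² + σ_s Δt)) and det(G) = (ε²/(ε² + σ_s Δt)) · ((1 − σ_a Δt)² − φ d² Δt²). Then det(G) + 1 − 2g = (Δt²/(ε² + σ_s Δt)) · (σ_a² ε² + σ_s σ_a − d²) ≥ 0. -/
/-- The identity `det(G) + 1 − 2g = (Δt²/(ε² + σ_s Δt))·(σ_a²ε² + σ_sσ_a − d²) ≥ 0`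
in the real-eigenvalue case of the von Neumann stability analysis. -/
theorem stmt2 (ε Δt σs σa φ dsq : ℝ)
    (hε : 0 < ε) (hΔt : 0 < Δt) (hσs : 0 ≤ σs) (hσa : 0 ≤ σa)
    (hσt : 0 < σs + ε ^ 2 * σa) (hφ : 0 ≤ φ) (hdsq : dsq ≤ 0)
    (g detG : ℝ)
    (hg : g = 1 / 2 * (1 / (ε ^ 2 + σs * Δt)) *
      (Δt ^ 2 * dsq * (1 - ε ^ 2 * φ) + (1 - σa * Δt) * (2 * ε ^ 2 + σs * Δt)))
    (hdetG : detG = ε ^ 2 / (ε ^ 2 + σs * Δt) * ((1 - σa * Δt) ^ 2 - φ * dsq * Δt ^ 2)) :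
    detG + 1 - 2 * g = Δt ^ 2 / (ε ^ 2 + σs * Δt) * (σa ^ 2 * ε ^ 2 + σs * σa - dsq) ∧
    0 ≤ detG + 1 - 2 * g := by
  have hden : 0 < ε ^ 2 + σs * Δt := by positivity
  have heq : detG + 1 - 2 * g =
      Δt ^ 2 / (ε ^ 2 + σs * Δt) * (σa ^ 2 * ε ^ 2 + σs * σa - dsq) := by
    subst hg hdetG
    field_simp
    ring
  refine ⟨heq, ?_⟩
  rw [heq]
  have h1 : 0 ≤ σa ^ 2 * ε ^ 2 + σs * σa - dsq := by nlinarith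
  positivity
end

section
/- Let ε > 0, Δt > 0, σ_s ≥ 0, σ_a ≥ 0, h > 0, φ with 0 ≤ ε²φ ≤ 1, and d² ∈ [−4/h², 0] real. Define σ_t = σ_s + ε²σ_a and g = (1/2)(1/(ε² + σ_s Δt)) · (Δt² d² (1 − ε²φ) + (1 − σ_a Δt)(2ε² + σ_s Δt)). If Δt ≤ 1/σ_a (vacuously if σ_a = 0) and Δt ≤ max{εh/2, h²σ_t/4}, then 1 + 2g ≥ (1/(ε² + σ_s Δt)) · (ε² − 4Δt²/h² + σ_s Δt) ≥ 0. -/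
/-!
Write `D = ε² + σ_s Δt > 0`. Then `1 + 2g = (D + Δt² d² (1 - ε²φ) + (1 - σ_a Δt)(2ε² + σ_s Δt)) / D`;
the last product is nonnegative by `σ_a Δt ≤ 1`, and `Δt² d² (1 - ε²φ) ≥ Δt² d² ≥ -4Δt²/h²`
since `d² ≤ 0 ≤ ε²φ`, which gives the lower bound. For its nonnegativity, rewrite
`ε² - 4Δt²/h² + σ_s Δt = ε²(1 - σ_a Δt) + Δt (σ_t - 4Δt/h²)`: under `Δt ≤ εh/2` already
`ε² ≥ 4Δt²/h²`, and under `Δt ≤ h²σ_t/4` both summands of the rewritten form are nonnegative.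
-/

lemma four_mul_sq_div_sq_le_sq {Δt ε h : ℝ} (hΔt : 0 ≤ Δt) (hh : 0 < h) (hCFL : Δt ≤ ε * h / 2) :
    4 * Δt ^ 2 / h ^ 2 ≤ ε ^ 2 := by
  rw [div_le_iff₀ (by positivity)]
  nlinarith

lemma four_mul_div_sq_le {Δt σt h : ℝ} (hh : 0 < h) (hCFL : Δt ≤ h ^ 2 * σt / 4) :
    4 * Δt / h ^ 2 ≤ σt := by
  rw [div_le_iff₀ (by positivity)]
  linarith

lemma cfl_numerator_eq (ε Δt σs σa h : ℝ) :
    ε ^ 2 - 4 * Δt ^ 2 / h ^ 2 + σs * Δt =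
      ε ^ 2 * (1 - σa * Δt) + Δt * (σs + ε ^ 2 * σa - 4 * Δt / h ^ 2) := by
  ring

lemma cfl_numerator_nonneg {ε Δt σs σa h : ℝ} (hΔt : 0 < Δt) (hσs : 0 ≤ σs) (hh : 0 < h)
    (hCFL1 : σa * Δt ≤ 1) (hCFL2 : Δt ≤ max (ε * h / 2) (h ^ 2 * (σs + ε ^ 2 * σa) / 4)) :
    0 ≤ ε ^ 2 - 4 * Δt ^ 2 / h ^ 2 + σs * Δt := by
  rcases le_max_iff.mp hCFL2 with hc | hc
  · have := four_mul_sq_div_sq_le_sq hΔt.le hh hc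
    nlinarith
  · rw [cfl_numerator_eq ε Δt σs σa h]
    have := four_mul_div_sq_le hh hc
    have : 0 ≤ ε ^ 2 * (1 - σa * Δt) := mul_nonneg (sq_nonneg ε) (by linarith)
    nlinarith

lemma neg_four_mul_sq_div_sq_le {Δt h dsq ψ : ℝ} (hψ : 0 ≤ ψ)
    (hdsq1 : -(4 / h ^ 2) ≤ dsq) (hdsq2 : dsq ≤ 0) :
    -(4 * Δt ^ 2 / h ^ 2) ≤ Δt ^ 2 * dsq * (1 - ψ) :=
  calc -(4 * Δt ^ 2 / h ^ 2) = Δt ^ 2 * -(4 / h ^ 2) := by ring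
    _ ≤ Δt ^ 2 * dsq := mul_le_mul_of_nonneg_left hdsq1 (sq_nonneg Δt)
    _ ≤ Δt ^ 2 * dsq * (1 - ψ) := by
      nlinarith [mul_nonneg (sq_nonneg Δt) (mul_nonneg (neg_nonneg.mpr hdsq2) hψ)]

lemma one_add_two_mul_half_div {D N : ℝ} (hD : D ≠ 0) :
    1 + 2 * (1 / 2 * (1 / D) * N) = 1 / D * (D + N) := by
  field_simp

theorem stmt3_general (ε Δt σs σa h φ dsq : ℝ)
    (hε : 0 < ε) (hΔt : 0 < Δt) (hσs : 0 ≤ σs) (hh : 0 < h)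
    (hφ0 : 0 ≤ ε ^ 2 * φ)
    (hdsq1 : -(4 / h ^ 2) ≤ dsq) (hdsq2 : dsq ≤ 0)
    (σt g : ℝ) (hσt : σt = σs + ε ^ 2 * σa)
    (hg : g = 1 / 2 * (1 / (ε ^ 2 + σs * Δt)) *
      (Δt ^ 2 * dsq * (1 - ε ^ 2 * φ) + (1 - σa * Δt) * (2 * ε ^ 2 + σs * Δt)))
    (hCFL1 : σa * Δt ≤ 1)
    (hCFL2 : Δt ≤ max (ε * h / 2) (h ^ 2 * σt / 4)) :
    1 / (ε ^ 2 + σs * Δt) * (ε ^ 2 - 4 * Δt ^ 2 / h ^ 2 + σs * Δt) ≤ 1 + 2 * g ∧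
    0 ≤ 1 / (ε ^ 2 + σs * Δt) * (ε ^ 2 - 4 * Δt ^ 2 / h ^ 2 + σs * Δt) := by
  subst hg hσt
  have hD : 0 < ε ^ 2 + σs * Δt := by positivity
  refine ⟨?_, mul_nonneg (by positivity) (cfl_numerator_nonneg hΔt hσs hh hCFL1 hCFL2)⟩
  rw [one_add_two_mul_half_div hD.ne']
  have hdiffusion := neg_four_mul_sq_div_sq_le (Δt := Δt) hφ0 hdsq1 hdsq2
  have habsorption : 0 ≤ (1 - σa * Δt) * (2 * ε ^ 2 + σs * Δt) :=
    mul_nonneg (by linarith) (by positivity)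
  exact mul_le_mul_of_nonneg_left (by linarith) (by positivity)

/-- Lower bound on the half-trace:
`1 + 2g ≥ (1/(ε² + σ_s Δt))·(ε² − 4Δt²/h² + σ_s Δt) ≥ 0` under the CFL condition. -/
theorem stmt3 (ε Δt σs σa h φ dsq : ℝ)
    (hε : 0 < ε) (hΔt : 0 < Δt) (hσs : 0 ≤ σs) (hσa : 0 ≤ σa) (hh : 0 < h)
    (hφ0 : 0 ≤ ε ^ 2 * φ) (hφ1 : ε ^ 2 * φ ≤ 1)
    (hdsq1 : -(4 / h ^ 2) ≤ dsq) (hdsq2 : dsq ≤ 0)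
    (σt g : ℝ) (hσt : σt = σs + ε ^ 2 * σa)
    (hg : g = 1 / 2 * (1 / (ε ^ 2 + σs * Δt)) *
      (Δt ^ 2 * dsq * (1 - ε ^ 2 * φ) + (1 - σa * Δt) * (2 * ε ^ 2 + σs * Δt)))
    (hCFL1 : σa * Δt ≤ 1)
    (hCFL2 : Δt ≤ max (ε * h / 2) (h ^ 2 * σt / 4)) :
    1 / (ε ^ 2 + σs * Δt) * (ε ^ 2 - 4 * Δt ^ 2 / h ^ 2 + σs * Δt) ≤ 1 + 2 * g ∧
    0 ≤ 1 / (ε ^ 2 + σs * Δt) * (ε ^ 2 - 4 * Δt ^ 2 / h ^ 2 + σs * Δt) :=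
  stmt3_general ε Δt σs σa h φ dsq hε hΔt hσs hh hφ0 hdsq1 hdsq2 σt g hσt hg hCFL1 hCFL2
end

section
/- Let ε > 0, Δt > 0, σ_s ≥ 0, σ_a ≥ 0 with σ_t := σ_s + ε²σ_a > 0, d² ≤ 0 real, φ real. Define g = (1/2)(1/(ε² + σ_s Δt)) · (Δt² d² (1 − ε²φ) + (1 − σ_a Δt)(2ε² + σ_s Δt)). If 0 ≤ ε²φ ≤ 1 and σ_a Δt ≤ 1, then g < 1. -/
/-- Strict upper bound `g < 1` on the half-trace of the growth factor matrix. -/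
theorem stmt4 (ε Δt σs σa φ dsq : ℝ)
    (hε : 0 < ε) (hΔt : 0 < Δt) (hσs : 0 ≤ σs) (hσa : 0 ≤ σa)
    (hσt : 0 < σs + ε ^ 2 * σa) (hdsq : dsq ≤ 0)
    (hφ0 : 0 ≤ ε ^ 2 * φ) (hφ1 : ε ^ 2 * φ ≤ 1) (ha : σa * Δt ≤ 1)
    (g : ℝ)
    (hg : g = 1 / 2 * (1 / (ε ^ 2 + σs * Δt)) *
      (Δt ^ 2 * dsq * (1 - ε ^ 2 * φ) + (1 - σa * Δt) * (2 * ε ^ 2 + σs * Δt))) :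
    g < 1 := by
  have hD : 0 < ε ^ 2 + σs * Δt := by positivity
  have h1 : Δt ^ 2 * dsq * (1 - ε ^ 2 * φ) ≤ 0 :=
    mul_nonpos_of_nonpos_of_nonneg
      (mul_nonpos_of_nonneg_of_nonpos (sq_nonneg Δt) hdsq) (by linarith)
  have key : Δt ^ 2 * dsq * (1 - ε ^ 2 * φ) + (1 - σa * Δt) * (2 * ε ^ 2 + σs * Δt)
      < 2 * (ε ^ 2 + σs * Δt) := by
    nlinarith [mul_pos hσt hΔt, mul_nonneg (mul_nonneg hσa hΔt.le) (mul_nonneg hσs hΔt.le),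
      mul_nonneg (mul_nonneg hσa hΔt.le) (sq_nonneg ε)]
  have : g = (Δt ^ 2 * dsq * (1 - ε ^ 2 * φ) + (1 - σa * Δt) * (2 * ε ^ 2 + σs * Δt))
      / (2 * (ε ^ 2 + σs * Δt)) := by rw [hg]; field_simp
  rw [this, div_lt_one (by positivity)]
  exact key
end

section
/- Let ε, h, σ_t > 0 and suppose φ satisfies 0 ≤ φ ≤ hσ_t/(2ε³) if hσ_t ≤ 2ε and 0 ≤ φ ≤ 1/ε² otherwise, and Δt ≤ max{εh/2, h²σ_t/4}. Then ε²φ·(4Δt/h²) ≤ σ_t. -/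
/-- The key inequality `ε²φ·(4Δt/h²) ≤ σ_t` guaranteeing `det(G) ≤ 1`. -/
theorem stmt17 (ε h σt Δt φ : ℝ)
    (hε : 0 < ε) (hh : 0 < h) (hσt : 0 < σt)
    (hφ0 : 0 ≤ φ)
    (hφbd : if h * σt ≤ 2 * ε then φ ≤ h * σt / (2 * ε ^ 3) else φ ≤ 1 / ε ^ 2)
    (hCFL : Δt ≤ max (ε * h / 2) (h ^ 2 * σt / 4)) :
    ε ^ 2 * φ * (4 * Δt / h ^ 2) ≤ σt := by
  split_ifs at hφbd with hc
  · have hmax : max (ε * h / 2) (h ^ 2 * σt / 4) = ε * h / 2 := by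
      apply max_eq_left
      nlinarith
    rw [hmax] at hCFL
    have hφ : φ ≤ h * σt / (2 * ε ^ 3) := hφbd
    rw [le_div_iff₀ (by positivity : (0:ℝ) < 2 * ε ^ 3)] at hφ
    have h1 : ε ^ 2 * φ * (4 * Δt / h ^ 2) ≤ ε ^ 2 * φ * (4 * (ε * h / 2) / h ^ 2) := by
      apply mul_le_mul_of_nonneg_left _ (by positivity)
      apply div_le_div_of_nonneg_right _ (by positivity)
      linarith
    refine h1.trans ?_
    rw [mul_comm, div_mul_eq_mul_div, div_le_iff₀ (by positivity : (0:ℝ) < h ^ 2)]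
    nlinarith
  · have hmax : max (ε * h / 2) (h ^ 2 * σt / 4) = h ^ 2 * σt / 4 := by
      apply max_eq_right
      nlinarith
    rw [hmax] at hCFL
    rw [le_div_iff₀ (by positivity : (0:ℝ) < ε ^ 2)] at hφbd
    have h1 : ε ^ 2 * φ * (4 * Δt / h ^ 2) ≤ ε ^ 2 * φ * (4 * (h ^ 2 * σt / 4) / h ^ 2) := by
      apply mul_le_mul_of_nonneg_left _ (by positivity)
      apply div_le_div_of_nonneg_right _ (by positivity)
      linarith
    refine h1.trans ?_
    rw [mul_comm, div_mul_eq_mul_div, div_le_iff₀ (by positivity : (0:ℝ) < h ^ 2)]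
    nlinarith [mul_pos hσt (mul_pos hh hh)]
end
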